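/- For every natural number n, the following identity among Bernoulli numbers holds: Σ_{k=0}^{n+3} C(n+3, k) · C(n+k+3, 3) · B_{n+k} = 0, where C(a, b) denotes the binomial coefficient (the Chen–Sun identity, obtained from the main identity at m = n, q = 3). -/

import Mathlib

/-!
Let `L : ℚ[X] → ℚ` be the umbral evaluation `X ^ m ↦ B_m`. Since `(B + 1) ^ m` and `(-B) ^ m`
both equal `B'_m = B_m + [m = 1]`, `L` is invariant under the reflection `X ↦ -X - 1`. The
polynomial `(X (X + 1)) ^ N` is fixed by that reflection, so its odd derivatives are
anti-invariant and are killed by `L`. Expanding the third derivative for `N = n + 3` gives the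
identity.
-/

open Finset

theorem sum_range_succ_choose_mul_bernoulli (m : ℕ) :
    ∑ k ∈ range (m + 1), (m.choose k : ℚ) * bernoulli k = bernoulli' m := by
  rw [sum_range_succ, sum_bernoulli, Nat.choose_self, Nat.cast_one, one_mul]
  rcases eq_or_ne m 1 with rfl | hm
  · norm_num [bernoulli_one, bernoulli'_one]
  · rw [if_neg hm, zero_add, bernoulli_eq_bernoulli'_of_ne_one hm]

open Polynomial hiding bernoulli

theorem Polynomial.iterate_derivative_comp_C_sub_X {R : Type*} [CommRing R] (c : R) (p : R[X])
    (k : ℕ) :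
    derivative^[k] (p.comp (C c - X)) = (-1) ^ k * (derivative^[k] p).comp (C c - X) := by
  induction k generalizing p with
  | zero => simp
  | succ k ih => simp [ih (derivative p), derivative_comp, pow_succ]

noncomputable def bernoulliUmbra : ℚ[X] →ₗ[ℚ] ℚ :=
  Polynomial.lsum fun i => LinearMap.toSpanSingleton ℚ ℚ (bernoulli i)

theorem bernoulliUmbra_monomial (m : ℕ) (a : ℚ) :
    bernoulliUmbra (monomial m a) = a * bernoulli m := by
  simp [bernoulliUmbra, sum_monomial_index, LinearMap.toSpanSingleton_apply, smul_eq_mul]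

theorem bernoulliUmbra_C_mul_X_pow (a : ℚ) (m : ℕ) :
    bernoulliUmbra (C a * X ^ m) = a * bernoulli m := by
  rw [C_mul_X_pow_eq_monomial, bernoulliUmbra_monomial]

theorem bernoulliUmbra_X_add_one_pow (m : ℕ) : bernoulliUmbra ((X + 1) ^ m) = bernoulli' m := by
  rw [add_pow, map_sum, ← sum_range_succ_choose_mul_bernoulli]
  refine sum_congr rfl fun k _ => ?_
  rw [one_pow, mul_one, mul_comm, ← C_eq_natCast, bernoulliUmbra_C_mul_X_pow]

theorem bernoulliUmbra_neg_X_pow (m : ℕ) : bernoulliUmbra ((-X) ^ m) = bernoulli' m := by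
  rw [neg_pow, ← map_one C, ← map_neg C, ← map_pow C, bernoulliUmbra_C_mul_X_pow,
    bernoulli'_eq_bernoulli]

theorem bernoulliUmbra_comp_X_add_one (f : ℚ[X]) :
    bernoulliUmbra (f.comp (X + 1)) = bernoulliUmbra (f.comp (-X)) := by
  induction f using Polynomial.induction_on' with
  | add p q hp hq => rw [add_comp, add_comp, map_add, map_add, hp, hq]
  | monomial m a =>
    rw [monomial_comp, monomial_comp, ← smul_eq_C_mul, ← smul_eq_C_mul, map_smul, map_smul,
      bernoulliUmbra_X_add_one_pow, bernoulliUmbra_neg_X_pow]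

theorem bernoulliUmbra_comp_neg_X_sub_one (f : ℚ[X]) :
    bernoulliUmbra (f.comp (C (-1) - X)) = bernoulliUmbra f := by
  have h := bernoulliUmbra_comp_X_add_one (f.comp (-X))
  have reflection : (-X : ℚ[X]).comp (X + 1) = C (-1) - X := by
    rw [neg_comp, X_comp, map_neg, map_one]; ring
  rwa [comp_assoc, comp_assoc, reflection, neg_comp, X_comp, neg_neg, comp_X] at h

theorem bernoulliUmbra_eq_zero_of_comp_neg_X_sub_one_eq_neg {f : ℚ[X]}
    (hf : f.comp (C (-1) - X) = -f) : bernoulliUmbra f = 0 := by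
  have h := bernoulliUmbra_comp_neg_X_sub_one f
  rw [hf, map_neg, neg_eq_iff_add_eq_zero, ← two_mul] at h
  simpa using h

theorem bernoulliUmbra_iterate_derivative_eq_zero_of_odd {p : ℚ[X]}
    (hp : p.comp (C (-1) - X) = p) {q : ℕ} (hq : Odd q) :
    bernoulliUmbra (derivative^[q] p) = 0 := by
  refine bernoulliUmbra_eq_zero_of_comp_neg_X_sub_one_eq_neg ?_
  have h := iterate_derivative_comp_C_sub_X (-1) p q
  rw [hp, hq.neg_one_pow, neg_one_mul] at h
  rw [← neg_neg ((derivative^[q] p).comp _), ← h]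

theorem X_mul_X_add_one_pow_comp_neg_X_sub_one (N : ℕ) :
    ((X * (X + 1)) ^ N : ℚ[X]).comp (C (-1) - X) = (X * (X + 1)) ^ N := by
  simp only [pow_comp, mul_comp, add_comp, X_comp, one_comp, map_neg, map_one]
  ring

theorem iterate_derivative_X_mul_X_add_one_pow (N q : ℕ) :
    derivative^[q] ((X * (X + 1)) ^ N : ℚ[X]) =
      ∑ k ∈ range (N + 1), C ((N.choose k : ℚ) * (N + k).descFactorial q) * X ^ (N + k - q) := by
  rw [mul_pow, add_pow, mul_sum, iterate_derivative_sum]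
  refine sum_congr rfl fun k _ => ?_
  rw [one_pow, mul_one, ← mul_assoc, ← pow_add, mul_comm, ← C_eq_natCast,
    iterate_derivative_C_mul, iterate_derivative_X_pow_eq_C_mul, ← mul_assoc, ← map_mul]

theorem sum_choose_mul_descFactorial_mul_bernoulli (N : ℕ) {q : ℕ} (hq : Odd q) :
    ∑ k ∈ range (N + 1), (N.choose k : ℚ) * (N + k).descFactorial q * bernoulli (N + k - q)
      = 0 := by
  have h := bernoulliUmbra_iterate_derivative_eq_zero_of_odd
    (X_mul_X_add_one_pow_comp_neg_X_sub_one N) hq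
  simpa only [iterate_derivative_X_mul_X_add_one_pow, map_sum, bernoulliUmbra_C_mul_X_pow]
    using h

theorem chen_sun_identity (n : ℕ) :
    ∑ k ∈ Finset.range (n + 4),
      ((n + 3).choose k : ℚ) * ((n + k + 3).choose 3 : ℚ) * bernoulli (n + k) = 0 := by
  have h := sum_choose_mul_descFactorial_mul_bernoulli (n + 3) (by decide : Odd 3)
  have descFactorial_three : ∀ k, ((n + 3).choose k : ℚ) * ((n + 3 + k).descFactorial 3 : ℚ) *
      bernoulli (n + 3 + k - 3) =
        6 * (((n + 3).choose k : ℚ) * ((n + k + 3).choose 3 : ℚ) * bernoulli (n + k)) := by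
    intro k
    rw [show n + 3 + k = n + k + 3 by ring, Nat.add_sub_cancel,
      Nat.descFactorial_eq_factorial_mul_choose]
    push_cast [Nat.factorial]
    ring
  simp only [descFactorial_three, ← mul_sum] at h
  simpa using h
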